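/- Let ρ > 0 and p₁ = (x₁, y₁) ∈ ℝ² with d₁₂ := ‖p₁‖ ≥ 2ρ, and let β₁ be the polar angle of p₁. Define L₁(θ) = √(d₁₂² − 2ρ(x₁ sin θ − y₁ cos θ)) and φ₁(θ) = atan2(y₁ + ρ cos θ, x₁ − ρ sin θ) + arctan(ρ / L₁(θ)). Then for every θ with L₁(θ) > 0, one has the identity d₁₂ · sin(φ₁(θ) − β₁) = ρ(1 − cos(φ₁(θ) − θ − π)). -/

import Mathlib

/-- Four-quadrant arctangent: `atan2 y x` is the argument of the complex number `x + y i`. -/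
noncomputable def atan2 (y x : ℝ) : ℝ := Complex.arg ⟨x, y⟩

/-- Tangent-segment length of the SR Dubins path from `p₁ = (x₁, y₁)` to the origin
arriving with heading `θ`: `L₁(θ) = √(‖p₁‖² − 2ρ(x₁ sin θ − y₁ cos θ))`. -/
noncomputable def Lsr (ρ x₁ y₁ θ : ℝ) : ℝ :=
  Real.sqrt (Real.sqrt (x₁ ^ 2 + y₁ ^ 2) ^ 2 - 2 * ρ * (x₁ * Real.sin θ - y₁ * Real.cos θ))

/-- Heading along the straight segment of the reversed (LS) path:
`φ₁(θ) = atan2(y₁ + ρ cos θ, x₁ − ρ sin θ) + arctan(ρ / L₁(θ))`. -/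
noncomputable def φsr (ρ x₁ y₁ θ : ℝ) : ℝ :=
  atan2 (y₁ + ρ * Real.cos θ) (x₁ - ρ * Real.sin θ) + Real.arctan (ρ / Lsr ρ x₁ y₁ θ)

/-- Total SR Dubins path length `D₁(θ) = ρ(φ₁(θ) − θ − π) + L₁(θ)`. -/
noncomputable def Dsr (ρ x₁ y₁ θ : ℝ) : ℝ :=
  ρ * (φsr ρ x₁ y₁ θ - θ - Real.pi) + Lsr ρ x₁ y₁ θ

/-!
From the centre `c(θ) = (ρ sin θ, −ρ cos θ)` of the turning circle, `p₁` is reached by going `ρ`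
along the right normal of the heading `φ = φ₁(θ)` (to the point of tangency) and then `L = L₁(θ)`
along the heading: `p₁ − c(θ) = (L − iρ) e^{iφ}`. The left side of the identity is the cross
product `p₁ × e^{iφ}`, and the decomposition turns it into `c(θ) × e^{iφ} + ρ = ρ (1 + cos (φ − θ))`.
-/

open Complex ComplexConjugate

theorem Real.arctan_div_eq_arg {L : ℝ} (hL : 0 < L) (ρ : ℝ) :
    Real.arctan (ρ / L) = arg ⟨L, ρ⟩ := by
  have hnorm : ‖(⟨L, ρ⟩ : ℂ)‖ = √(L ^ 2 + ρ ^ 2) := by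
    rw [Complex.norm_def, Complex.normSq_mk]; ring_nf
  have hsqrt : √(1 + (ρ / L) ^ 2) = √(L ^ 2 + ρ ^ 2) / L := by
    rw [show 1 + (ρ / L) ^ 2 = (L ^ 2 + ρ ^ 2) / L ^ 2 by field_simp,
      Real.sqrt_div' _ (sq_nonneg L), Real.sqrt_sq hL.le]
  have hR : 0 < √(L ^ 2 + ρ ^ 2) := Real.sqrt_pos.mpr (by positivity)
  rw [Real.arctan_eq_arcsin, arg_of_re_nonneg hL.le, hnorm, hsqrt]
  congr 1
  field_simp

theorem Complex.eq_conj_mul_exp_of_norm_eq {z w : ℂ} (h : ‖z‖ = ‖w‖) :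
    z = conj w * exp ((arg z + arg w) * I) := by
  have hconj : conj w = ‖w‖ * exp (-(arg w * I)) := by
    conv_lhs => rw [← norm_mul_exp_arg_mul_I w]
    rw [map_mul, conj_ofReal, ← exp_conj, map_mul, conj_ofReal, conj_I, mul_neg]
  rw [hconj, mul_assoc, ← exp_add, ← h]
  conv_lhs => rw [← norm_mul_exp_arg_mul_I z]
  ring_nf

section SubCenter

variable {ρ x₁ y₁ θ : ℝ}

theorem sub_center_sq_add_sq (hL : 0 < Lsr ρ x₁ y₁ θ) :
    (x₁ - ρ * Real.sin θ) ^ 2 + (y₁ + ρ * Real.cos θ) ^ 2 = Lsr ρ x₁ y₁ θ ^ 2 + ρ ^ 2 := by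
  rw [Lsr, Real.sq_sqrt (Real.sqrt_pos.mp hL).le, Real.sq_sqrt (by positivity)]
  linear_combination ρ ^ 2 * Real.sin_sq_add_cos_sq θ

theorem sub_center_eq_mul_exp_φsr (hL : 0 < Lsr ρ x₁ y₁ θ) :
    (⟨x₁ - ρ * Real.sin θ, y₁ + ρ * Real.cos θ⟩ : ℂ)
      = ⟨Lsr ρ x₁ y₁ θ, -ρ⟩ * exp (φsr ρ x₁ y₁ θ * I) := by
  have hnorm : ‖(⟨x₁ - ρ * Real.sin θ, y₁ + ρ * Real.cos θ⟩ : ℂ)‖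
      = ‖(⟨Lsr ρ x₁ y₁ θ, ρ⟩ : ℂ)‖ := by
    simp only [Complex.norm_def, Complex.normSq_mk, ← sq, sub_center_sq_add_sq hL]
  rw [φsr, atan2, Real.arctan_div_eq_arg hL]
  convert Complex.eq_conj_mul_exp_of_norm_eq hnorm using 2
  · exact Complex.ext rfl rfl
  · push_cast; rfl

theorem sub_center_eq_Lsr_mul_cos_add_and_sin_sub (hL : 0 < Lsr ρ x₁ y₁ θ) :
    x₁ - ρ * Real.sin θ
        = Lsr ρ x₁ y₁ θ * Real.cos (φsr ρ x₁ y₁ θ) + ρ * Real.sin (φsr ρ x₁ y₁ θ) ∧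
      y₁ + ρ * Real.cos θ
        = Lsr ρ x₁ y₁ θ * Real.sin (φsr ρ x₁ y₁ θ) - ρ * Real.cos (φsr ρ x₁ y₁ θ) := by
  have h := Complex.ext_iff.mp (sub_center_eq_mul_exp_φsr hL)
  simp only [mul_re, mul_im, exp_ofReal_mul_I_re, exp_ofReal_mul_I_im] at h
  constructor <;> linarith [h.1, h.2]

end SubCenter

theorem stmt8_general (ρ x₁ y₁ β₁ : ℝ)
    (hβ₁ : x₁ = Real.sqrt (x₁ ^ 2 + y₁ ^ 2) * Real.cos β₁)
    (hβ₂ : y₁ = Real.sqrt (x₁ ^ 2 + y₁ ^ 2) * Real.sin β₁) :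
    ∀ θ : ℝ, 0 < Lsr ρ x₁ y₁ θ →
      Real.sqrt (x₁ ^ 2 + y₁ ^ 2) * Real.sin (φsr ρ x₁ y₁ θ - β₁)
        = ρ * (1 - Real.cos (φsr ρ x₁ y₁ θ - θ - Real.pi)) := by
  intro θ hL
  obtain ⟨hx, hy⟩ := sub_center_eq_Lsr_mul_cos_add_and_sin_sub hL
  set φ := φsr ρ x₁ y₁ θ
  rw [Real.sin_sub, Real.cos_sub_pi, Real.cos_sub]
  linear_combination Real.sin φ * hx - Real.cos φ * hy + ρ * Real.sin_sq_add_cos_sq φ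
    - Real.sin φ * hβ₁ + Real.cos φ * hβ₂

theorem stmt8 (ρ x₁ y₁ β₁ : ℝ) (hρ : 0 < ρ)
    (hd : 2 * ρ ≤ Real.sqrt (x₁ ^ 2 + y₁ ^ 2))
    (hβ₁ : x₁ = Real.sqrt (x₁ ^ 2 + y₁ ^ 2) * Real.cos β₁)
    (hβ₂ : y₁ = Real.sqrt (x₁ ^ 2 + y₁ ^ 2) * Real.sin β₁) :
    ∀ θ : ℝ, 0 < Lsr ρ x₁ y₁ θ →
      Real.sqrt (x₁ ^ 2 + y₁ ^ 2) * Real.sin (φsr ρ x₁ y₁ θ - β₁)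
        = ρ * (1 - Real.cos (φsr ρ x₁ y₁ θ - θ - Real.pi)) :=
  stmt8_general ρ x₁ y₁ β₁ hβ₁ hβ₂
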